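/- arXiv:2004.03444 — 5 statements merged into one kernel-verified Lean document; each statement's English description precedes it below -/
import Mathlib

section
/- Let T be an n×n real matrix with nonnegative entries and let ρ be its spectral radius (the maximum of the moduli of the complex roots of its characteristic polynomial). Then for every real x with 0 ≤ x < 1/ρ, the series ∑_{k≥1} (tr(T^k)/k)·x^k is summable (each term being nonnegative, since tr(T^k) ≥ 0 for a matrix with nonnegative entries). -/
/-!
By Gelfand's formula, every `r` exceeding the spectral radius of `T` (viewed as a complex matrix)
eventually bounds `‖T ^ k‖ ^ (1 / k)`, so `tr (T ^ k) = O(r ^ k)`. For `0 ≤ x < 1 / ρ` one can take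
`r > ρ` with `r x < 1`, and the series is then dominated by a geometric one. Nonnegativity of the
traces comes from the entrywise nonnegativity of the powers of `T`.
-/

open Filter Asymptotics

theorem spectrum.isBigO_pow_of_spectralRadius_lt {A : Type*} [NormedRing A] [NormedAlgebra ℂ A]
    [CompleteSpace A] (a : A) {r : ℝ} (h : spectralRadius ℂ a < ENNReal.ofReal r) :
    (fun k : ℕ => a ^ k) =O[atTop] fun k => r ^ k := by
  refine IsBigO.of_bound' ?_
  filter_upwards [(pow_norm_pow_one_div_tendsto_nhds_spectralRadius a).eventually_lt_const h,
    eventually_ne_atTop 0] with k hk hk0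
  obtain ⟨hlt, hr⟩ := ENNReal.ofReal_lt_ofReal_iff'.mp hk
  calc ‖a ^ k‖ = (‖a ^ k‖ ^ (1 / k : ℝ)) ^ k := by
        rw [one_div, Real.rpow_inv_natCast_pow (norm_nonneg _) hk0]
    _ ≤ r ^ k := pow_le_pow_left₀ (by positivity) hlt.le k
    _ ≤ ‖r ^ k‖ := Real.le_norm_self _

theorem Matrix.spectralRadius_le_of_forall_mem_roots_norm_le {K n : Type*} [NormedField K]
    [Fintype n] [DecidableEq n] (A : Matrix n n K) {ρ : ℝ}
    (h : ∀ z ∈ A.charpoly.roots, ‖z‖ ≤ ρ) : spectralRadius K A ≤ ENNReal.ofReal ρ := by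
  refine iSup₂_le fun z hz => ?_
  rw [← enorm_eq_nnnorm, ← ofReal_norm]
  refine ENNReal.ofReal_le_ofReal (h z ?_)
  rw [Polynomial.mem_roots A.charpoly_monic.ne_zero]
  exact Matrix.mem_spectrum_iff_isRoot_charpoly.mp hz

section
-- Any Banach-algebra norm on matrices would do: the spectral radius does not depend on it.
attribute [local instance] Matrix.linftyOpNormedRing Matrix.linftyOpNormedAlgebra

theorem Matrix.isBigO_trace_pow_of_spectralRadius_lt {n : Type*} [Fintype n] [DecidableEq n]
    (A : Matrix n n ℂ) {r : ℝ} (h : spectralRadius ℂ A < ENNReal.ofReal r) :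
    (fun k : ℕ => (A ^ k).trace) =O[atTop] fun k => r ^ k :=
  (LinearMap.toContinuousLinearMap (Matrix.traceLinearMap n ℂ ℂ)).isBigO_comp _ _ |>.trans
    (spectrum.isBigO_pow_of_spectralRadius_lt A h)
end

theorem Matrix.isBigO_trace_pow_of_forall_mem_roots_norm_le {n : Type*} [Fintype n] [DecidableEq n]
    (T : Matrix n n ℝ) {ρ r : ℝ} (hρ : ∀ z ∈ (T.map ((↑) : ℝ → ℂ)).charpoly.roots, ‖z‖ ≤ ρ)
    (hρr : ρ < r) (hr : 0 < r) : (fun k : ℕ => (T ^ k).trace) =O[atTop] fun k => r ^ k := by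
  have hA : spectralRadius ℂ (T.map ((↑) : ℝ → ℂ)) < ENNReal.ofReal r :=
    (spectralRadius_le_of_forall_mem_roots_norm_le _ hρ).trans_lt
      (ENNReal.ofReal_lt_ofReal_iff'.mpr ⟨hρr, hr⟩)
  refine IsBigO.trans (isBigO_of_le _ fun k => ?_) (isBigO_trace_pow_of_spectralRadius_lt _ hA)
  rw [show T.map Complex.ofReal = T.map Complex.ofRealHom from rfl, ← Matrix.map_pow,
    ← AddMonoidHom.map_trace, Complex.ofRealHom_eq_coe, Complex.norm_real]

theorem summable_mul_pow_of_isBigO {a : ℕ → ℝ} {r x : ℝ} (ha : a =O[atTop] fun k => r ^ k)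
    (hrx : |r * x| < 1) : Summable fun k => a k * x ^ k :=
  summable_of_isBigO_nat (summable_geometric_of_abs_lt_one hrx) <| by
    simpa only [mul_pow] using ha.mul (isBigO_refl (fun k => x ^ k) atTop)

theorem summable_div_mul_pow_of_isBigO {a : ℕ → ℝ} {r x : ℝ} (ha : a =O[atTop] fun k => r ^ k)
    (hrx : |r * x| < 1) : Summable fun k : ℕ => a (k + 1) / (k + 1) * x ^ (k + 1) := by
  have hdiv : (fun k : ℕ => a k / k) =O[atTop] a := by
    refine IsBigO.of_bound' ?_
    filter_upwards [eventually_ge_atTop 1] with k hk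
    rw [norm_div, Real.norm_natCast]
    exact div_le_self (norm_nonneg _) (by exact_mod_cast hk)
  refine ((summable_nat_add_iff 1).mpr (summable_mul_pow_of_isBigO (hdiv.trans ha) hrx)).congr
    fun k => ?_
  push_cast
  rfl

theorem ihara_log_series_summable_general
    (n : ℕ) (T : Matrix (Fin n) (Fin n) ℝ)
    (hT : ∀ i j, 0 ≤ T i j) (ρ : ℝ)
    (hρ_ub : ∀ z ∈ (Matrix.charpoly (T.map (fun r => (r : ℂ)))).roots, ‖z‖ ≤ ρ) :
    (∀ k : ℕ, 0 ≤ (T ^ (k + 1)).trace) ∧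
      ∀ x : ℝ, 0 ≤ x → x < 1 / ρ →
        Summable (fun k : ℕ => (T ^ (k + 1)).trace / (k + 1) * x ^ (k + 1)) := by
  refine ⟨fun k => Finset.sum_nonneg fun i _ => Matrix.pow_apply_nonneg hT (k + 1) i i,
    fun x hx hxρ => ?_⟩
  have hρ : 0 < ρ := by
    by_contra! h
    linarith [one_div_nonpos.mpr h]
  obtain ⟨y, hxy, hyρ⟩ := exists_between hxρ
  have hy : 0 < y := hx.trans_lt hxy
  refine summable_div_mul_pow_of_isBigO (a := fun k => (T ^ k).trace)
    (T.isBigO_trace_pow_of_forall_mem_roots_norm_le hρ_ub ((lt_one_div hy hρ).mp hyρ)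
      (one_div_pos.mpr hy)) ?_
  rwa [one_div_mul_eq_div, abs_of_nonneg (by positivity), div_lt_one hy]

/-- For an n×n real matrix `T` with nonnegative entries and spectral radius `ρ`
(the maximum of the moduli of the complex roots of its characteristic polynomial),
for every real `x` with `0 ≤ x < 1/ρ`, the series `∑_{k≥1} (tr(T^k)/k)·x^k` is summable,
each term being nonnegative since `tr(T^k) ≥ 0`. -/
theorem ihara_log_series_summable
    (n : ℕ) (hn : 0 < n) (T : Matrix (Fin n) (Fin n) ℝ)
    (hT : ∀ i j, 0 ≤ T i j) (ρ : ℝ)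
    (hρ_ub : ∀ z ∈ (Matrix.charpoly (T.map (fun r => (r : ℂ)))).roots, ‖z‖ ≤ ρ)
    (hρ_mem : ∃ z ∈ (Matrix.charpoly (T.map (fun r => (r : ℂ)))).roots, ‖z‖ = ρ) :
    (∀ k : ℕ, 0 ≤ (T ^ (k + 1)).trace) ∧
      ∀ x : ℝ, 0 ≤ x → x < 1 / ρ →
        Summable (fun k : ℕ => (T ^ (k + 1)).trace / (k + 1) * x ^ (k + 1)) :=
  ihara_log_series_summable_general n T hT ρ hρ_ub
end

section
/- For every natural number m and every x ∈ [0, R), the m-th iterated derivative of the restricted Ihara zeta function is nonnegative: iteratedDeriv m ζ x ≥ 0. In particular ζ, ζ', ζ'', … are all monotone increasing on [0,R). -/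
/-! The exponent of `ζ` is the power series `f x = ∑ tr(T^k)/k * x^k`, whose coefficients are
nonnegative because `T` is entrywise nonnegative. Every derivative of `f` is again such a power
series, hence nonnegative on `[0, R)`. Since `ζ = exp ∘ f` satisfies `ζ' = f' * ζ`, Leibniz's rule
writes `ζ^(m+1)` as a nonnegative combination of the products `f^(i+1) * ζ^(m-i)`, and strong
induction on `m` gives `ζ^(m) ≥ 0` on `[0, R)`; monotonicity of `ζ^(m)` follows from
`ζ^(m+1) ≥ 0`. -/

open Set Filter Topology
open scoped ContDiff

theorem tsum_nat_succ_eq_tsum {M : Type*} [AddCommMonoid M] [TopologicalSpace M] {f : ℕ → M}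
    (h0 : f 0 = 0) : ∑' k, f (k + 1) = ∑' k, f k :=
  (add_left_injective 1).tsum_eq fun k hk =>
    (Nat.exists_eq_add_one_of_ne_zero fun hk0 => hk (by rw [hk0]; exact h0)).imp fun _ => Eq.symm

theorem ContDiffOn.iteratedDeriv_of_isOpen {𝕜 F : Type*} [NontriviallyNormedField 𝕜]
    [NormedAddCommGroup F] [NormedSpace 𝕜 F] {U : Set 𝕜} {g : 𝕜 → F}
    (hg : ContDiffOn 𝕜 ∞ g U) (hU : IsOpen U) (m : ℕ) : ContDiffOn 𝕜 ∞ (iteratedDeriv m g) U := by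
  induction m with
  | zero => simpa
  | succ m ih =>
    rw [iteratedDeriv_succ]
    exact ((contDiffOn_infty_iff_deriv_of_isOpen hU).1 ih).2

theorem monotoneOn_iteratedDeriv_of_nonneg {U I : Set ℝ} {g : ℝ → ℝ} (hU : IsOpen U)
    (hg : ContDiffOn ℝ ∞ g U) (hI : Convex ℝ I) (hIU : I ⊆ U) {m : ℕ}
    (h : ∀ x ∈ interior I, 0 ≤ iteratedDeriv (m + 1) g x) :
    MonotoneOn (iteratedDeriv m g) I := by
  have hdiff : DifferentiableOn ℝ (iteratedDeriv m g) I :=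
    ((hg.iteratedDeriv_of_isOpen hU m).differentiableOn (by simp)).mono hIU
  refine monotoneOn_of_deriv_nonneg hI hdiff.continuousOn (hdiff.mono interior_subset) ?_
  simpa only [← iteratedDeriv_succ] using h

theorem iteratedDeriv_nonneg_of_deriv_eq_mul {U I : Set ℝ} {f g : ℝ → ℝ} (hU : IsOpen U)
    (hIU : I ⊆ U) (hf : ContDiffOn ℝ ∞ f U) (hg : ContDiffOn ℝ ∞ g U)
    (hderiv : ∀ x ∈ U, deriv g x = f x * g x)
    (hf_nonneg : ∀ m, ∀ x ∈ I, 0 ≤ iteratedDeriv m f x) (hg_nonneg : ∀ x ∈ I, 0 ≤ g x) (m : ℕ) :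
    ∀ x ∈ I, 0 ≤ iteratedDeriv m g x := by
  induction m using Nat.strong_induction_on with
  | _ m ih =>
  intro x hx
  cases m with
  | zero => simpa using hg_nonneg x hx
  | succ m =>
    have hU_nhds : U ∈ 𝓝 x := hU.mem_nhds (hIU hx)
    have hderiv_nhds : deriv g =ᶠ[𝓝 x] f * g := eventually_of_mem hU_nhds hderiv
    have hm : (m : WithTop ℕ∞) ≤ ∞ := by exact_mod_cast le_top
    rw [iteratedDeriv_succ', hderiv_nhds.iteratedDeriv_eq,
      iteratedDeriv_mul ((hf.contDiffAt hU_nhds).of_le hm) ((hg.contDiffAt hU_nhds).of_le hm)]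
    exact Finset.sum_nonneg fun i _ => mul_nonneg
      (mul_nonneg (Nat.cast_nonneg _) (hf_nonneg i x hx)) (ih _ (by omega) x hx)

theorem Ico_zero_subset_Ioo_neg (R : ℝ) : Ico 0 R ⊆ Ioo (-R) R :=
  fun _ hx => ⟨by linarith [hx.1, hx.2], hx.2⟩

def derivCoeff (c : ℕ → ℝ) (k : ℕ) : ℝ := (k + 1) * c (k + 1)

noncomputable def powerSum (c : ℕ → ℝ) (x : ℝ) : ℝ := ∑' k, c k * x ^ k

structure NonnegPowerSeries (R : ℝ) (c : ℕ → ℝ) : Prop where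
  nonneg : ∀ k, 0 ≤ c k
  summable : ∀ x ∈ Ico 0 R, Summable fun k => c k * x ^ k

namespace NonnegPowerSeries

variable {R : ℝ} {c : ℕ → ℝ}

theorem powerSum_nonneg (hc : NonnegPowerSeries R c) {x : ℝ} (hx : 0 ≤ x) : 0 ≤ powerSum c x :=
  tsum_nonneg fun k => mul_nonneg (hc.nonneg k) (pow_nonneg hx k)

theorem derivSeries (hc : NonnegPowerSeries R c) : NonnegPowerSeries R (derivCoeff c) where
  nonneg k := mul_nonneg (by positivity) (hc.nonneg (k + 1))
  summable x hx := by
    obtain ⟨s, hxs, hsR⟩ := exists_between hx.2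
    have hs : 0 < s := hx.1.trans_lt hxs
    -- bound `c k ≤ B / s ^ k` and compare with the series `∑ (k + 1) (x / s) ^ k`
    set B := ∑' j, c j * s ^ j
    have hB : ∀ k, c k * s ^ k ≤ B := fun k => (hc.summable s ⟨hs.le, hsR⟩).le_tsum k
      fun j _ => mul_nonneg (hc.nonneg j) (pow_nonneg hs.le j)
    have hq : ‖x / s‖ < 1 := by
      rwa [Real.norm_of_nonneg (div_nonneg hx.1 hs.le), div_lt_one hs]
    have hgeom : Summable fun k : ℕ => ((k : ℝ) + 1) * (x / s) ^ k :=
      ((summable_pow_mul_geometric_of_norm_lt_one 1 hq).add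
        (summable_geometric_of_norm_lt_one hq)).congr fun k => by ring
    refine .of_nonneg_of_le (fun k => mul_nonneg (mul_nonneg (by positivity) (hc.nonneg _))
      (pow_nonneg hx.1 k)) (fun k => ?_) (hgeom.mul_left (B / s))
    calc _ = c (k + 1) * s ^ (k + 1) / s * ((k + 1) * (x / s) ^ k) := by
          rw [derivCoeff, div_pow, pow_succ]; field_simp
      _ ≤ B / s * ((k + 1) * (x / s) ^ k) := by
          have : 0 ≤ x / s := div_nonneg hx.1 hs.le
          gcongr
          exact hB (k + 1)

theorem hasDerivAt_powerSum (hc : NonnegPowerSeries R c) {x : ℝ} (hx : |x| < R) :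
    HasDerivAt (powerSum c) (powerSum (derivCoeff c) x) x := by
  obtain ⟨r, hxr, hrR⟩ := exists_between hx
  have hr : 0 < r := (abs_nonneg x).trans_lt hxr
  -- on `(-r, r)` the termwise derivatives are dominated by the derivative series at `r`
  set u : ℕ → ℝ := fun k => c k * (k * r ^ (k - 1))
  have hu : Summable u := by
    rw [← summable_nat_add_iff 1]
    refine (hc.derivSeries.summable r ⟨hr.le, hrR⟩).congr fun k => ?_
    simp only [u, derivCoeff, Nat.cast_add, Nat.cast_one, add_tsub_cancel_right]
    ring
  have hbound : ∀ k, ∀ y ∈ Ioo (-r) r, ‖c k * (k * y ^ (k - 1))‖ ≤ u k := by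
    intro k y hy
    rw [norm_mul, norm_mul, Real.norm_of_nonneg (hc.nonneg k), norm_pow, RCLike.norm_natCast]
    simp only [u]
    gcongr
    exacts [hc.nonneg k, (abs_lt.2 hy).le]
  have h := hasDerivAt_tsum_of_isPreconnected hu isOpen_Ioo isPreconnected_Ioo
    (fun k y _ => (hasDerivAt_pow k y).const_mul (c k)) hbound
    (y₀ := 0) ⟨neg_lt_zero.2 hr, hr⟩ (hc.summable 0 ⟨le_rfl, (abs_nonneg x).trans_lt hx⟩)
    (abs_lt.1 hxr)
  refine h.congr_deriv ?_
  rw [← tsum_nat_succ_eq_tsum (by simp)]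
  refine tsum_congr fun k => ?_
  simp only [derivCoeff, Nat.cast_add, Nat.cast_one, add_tsub_cancel_right]
  ring

theorem contDiffOn_powerSum (hc : NonnegPowerSeries R c) :
    ContDiffOn ℝ ∞ (powerSum c) (Ioo (-R) R) := by
  refine contDiffOn_infty.2 fun n => ?_
  induction n generalizing c with
  | zero =>
    exact contDiffOn_zero.2 fun x hx =>
      (hc.hasDerivAt_powerSum (abs_lt.2 hx)).continuousAt.continuousWithinAt
  | succ n ih =>
    rw [Nat.cast_succ, contDiffOn_succ_iff_deriv_of_isOpen isOpen_Ioo]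
    refine ⟨fun x hx =>
        (hc.hasDerivAt_powerSum (abs_lt.2 hx)).differentiableAt.differentiableWithinAt, by simp,
      (ih hc.derivSeries).congr fun x hx => (hc.hasDerivAt_powerSum (abs_lt.2 hx)).deriv⟩

theorem iteratedDeriv_powerSum_nonneg (hc : NonnegPowerSeries R c) (m : ℕ) {x : ℝ}
    (hx : x ∈ Ico 0 R) : 0 ≤ iteratedDeriv m (powerSum c) x := by
  induction m generalizing c with
  | zero => simpa using hc.powerSum_nonneg hx.1
  | succ m ih =>
    have hderiv : deriv (powerSum c) =ᶠ[𝓝 x] powerSum (derivCoeff c) :=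
      eventually_of_mem (isOpen_Ioo.mem_nhds (Ico_zero_subset_Ioo_neg R hx)) fun y hy =>
        (hc.hasDerivAt_powerSum (abs_lt.2 hy)).deriv
    rw [iteratedDeriv_succ', hderiv.iteratedDeriv_eq]
    exact ih hc.derivSeries

theorem iteratedDeriv_exp_powerSum_nonneg (hc : NonnegPowerSeries R c) (m : ℕ) :
    ∀ x ∈ Ico 0 R, 0 ≤ iteratedDeriv m (fun x => Real.exp (powerSum c x)) x :=
  iteratedDeriv_nonneg_of_deriv_eq_mul isOpen_Ioo (Ico_zero_subset_Ioo_neg R)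
    hc.derivSeries.contDiffOn_powerSum hc.contDiffOn_powerSum.exp
    (fun x hx => by rw [(hc.hasDerivAt_powerSum (abs_lt.2 hx)).exp.deriv, mul_comm])
    (fun m _ hx => hc.derivSeries.iteratedDeriv_powerSum_nonneg m hx)
    (fun _ _ => (Real.exp_pos _).le) m

theorem monotoneOn_iteratedDeriv_exp_powerSum (hc : NonnegPowerSeries R c) (m : ℕ) :
    MonotoneOn (iteratedDeriv m fun x => Real.exp (powerSum c x)) (Ico 0 R) :=
  monotoneOn_iteratedDeriv_of_nonneg isOpen_Ioo hc.contDiffOn_powerSum.exp (convex_Ico 0 R)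
    (Ico_zero_subset_Ioo_neg R) fun x hx =>
      hc.iteratedDeriv_exp_powerSum_nonneg (m + 1) x (interior_subset hx)

end NonnegPowerSeries

theorem ihara_zeta_iteratedDeriv_nonneg_general
    (n : ℕ) (T : Matrix (Fin n) (Fin n) ℝ)
    (hT : ∀ i j, 0 ≤ T i j)
    (R : ℝ)
    (hsum : ∀ x ∈ Set.Ico (0 : ℝ) R,
      Summable (fun k : ℕ => (T ^ (k + 1)).trace / (k + 1) * x ^ (k + 1)))
    (ζ : ℝ → ℝ)
    (hζ : ∀ x : ℝ, ζ x = Real.exp (∑' k : ℕ, (T ^ (k + 1)).trace / (k + 1) * x ^ (k + 1))) :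
    (∀ (m : ℕ), ∀ x ∈ Set.Ico (0 : ℝ) R, 0 ≤ iteratedDeriv m ζ x) ∧
      ∀ (m : ℕ), ∀ x ∈ Set.Ico (0 : ℝ) R, ∀ y ∈ Set.Ico (0 : ℝ) R, x ≤ y →
        iteratedDeriv m ζ x ≤ iteratedDeriv m ζ y := by
  -- `c 0 = 0`, as division by zero is zero in `ℝ`
  set c : ℕ → ℝ := fun k => (T ^ k).trace / k
  have hc : NonnegPowerSeries R c :=
    ⟨fun k => div_nonneg (Finset.sum_nonneg fun i _ => Matrix.pow_apply_nonneg hT k i i)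
      k.cast_nonneg,
    fun x hx => (summable_nat_add_iff 1).1 <| (hsum x hx).congr fun k => by simp [c]⟩
  have hζc : ζ = fun x => Real.exp (powerSum c x) := by
    funext x
    rw [hζ, powerSum, ← tsum_nat_succ_eq_tsum (f := fun k => c k * x ^ k) (by simp [c])]
    simp [c]
  subst hζc
  exact ⟨hc.iteratedDeriv_exp_powerSum_nonneg, fun m => hc.monotoneOn_iteratedDeriv_exp_powerSum m⟩

/-- For every natural number m and every x ∈ [0, R), the m-th iterated
derivative of the restricted Ihara zeta function is nonnegative; in particular
ζ, ζ', ζ'', … are all monotone increasing on [0,R). -/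
theorem ihara_zeta_iteratedDeriv_nonneg
    (n : ℕ) (hn : 0 < n) (T : Matrix (Fin n) (Fin n) ℝ)
    (hT : ∀ i j, 0 ≤ T i j) (htr : T.trace = 0)
    (R : ℝ) (hR : 0 < R)
    (hsum : ∀ x ∈ Set.Ico (0 : ℝ) R,
      Summable (fun k : ℕ => (T ^ (k + 1)).trace / (k + 1) * x ^ (k + 1)))
    (ζ : ℝ → ℝ)
    (hζ : ∀ x : ℝ, ζ x = Real.exp (∑' k : ℕ, (T ^ (k + 1)).trace / (k + 1) * x ^ (k + 1))) :
    (∀ (m : ℕ), ∀ x ∈ Set.Ico (0 : ℝ) R, 0 ≤ iteratedDeriv m ζ x) ∧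
      ∀ (m : ℕ), ∀ x ∈ Set.Ico (0 : ℝ) R, ∀ y ∈ Set.Ico (0 : ℝ) R, x ≤ y →
        iteratedDeriv m ζ x ≤ iteratedDeriv m ζ y :=
  ihara_zeta_iteratedDeriv_nonneg_general n T hT R hsum ζ hζ
end

section
/- For every p ∈ [0,1] one has s(p) ≥ 0, i.e. p·(ζ(a) + 1 − ζ(a·p) − p)/(1 + a·ζ'(a)) ≥ 0. Consequently, for any discrete probability distribution p₁,…,p_W (pᵢ ≥ 0, ∑ᵢ pᵢ = 1), the Ihara entropy S_G(P) = ∑ᵢ s(pᵢ) is nonnegative. -/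
/-!
The power series `∑ tr(T^k)/k · x^k` has nonnegative coefficients, since a matrix with
nonnegative entries has powers with nonnegative traces. Hence `ζ` is monotone on `[0, R)`, so
`ζ(a·p) ≤ ζ(a)` for `p ∈ [0, 1]` and `ζ'(a) ≥ 0`; the numerator and the denominator of `s(p)` are
then both nonnegative.
-/

open Set

theorem Matrix.trace_pow_nonneg {n α : Type*} [Fintype n] [DecidableEq n] [Semiring α]
    [PartialOrder α] [IsOrderedRing α] {A : Matrix n n α} (hA : ∀ i j, 0 ≤ A i j) (k : ℕ) :
    0 ≤ (A ^ k).trace :=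
  Finset.sum_nonneg fun i _ => Matrix.pow_apply_nonneg hA k i i

theorem MonotoneOn.deriv_nonneg_of_mem_nhds {f : ℝ → ℝ} {s : Set ℝ} {x : ℝ}
    (hf : MonotoneOn f s) (hs : s ∈ nhds x) : 0 ≤ deriv f x :=
  derivWithin_of_mem_nhds (f := f) hs ▸ hf.derivWithin_nonneg

theorem monotoneOn_tsum_mul_pow_succ {c : ℕ → ℝ} {R : ℝ} (hc : ∀ k, 0 ≤ c k)
    (hsum : ∀ x ∈ Ico (0 : ℝ) R, Summable fun k => c k * x ^ (k + 1)) :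
    MonotoneOn (fun x => ∑' k, c k * x ^ (k + 1)) (Ico 0 R) := fun x hx y hy hxy =>
  Summable.tsum_le_tsum (fun k => mul_le_mul_of_nonneg_left (pow_le_pow_left₀ hx.1 hxy _) (hc k))
    (hsum x hx) (hsum y hy)

theorem ihara_entropy_nonneg_general
    (n : ℕ) (T : Matrix (Fin n) (Fin n) ℝ)
    (hT : ∀ i j, 0 ≤ T i j)
    (R : ℝ)
    (hsum : ∀ x ∈ Set.Ico (0 : ℝ) R,
      Summable (fun k : ℕ => (T ^ (k + 1)).trace / (k + 1) * x ^ (k + 1)))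
    (ζ : ℝ → ℝ)
    (hζ : ∀ x : ℝ, ζ x = Real.exp (∑' k : ℕ, (T ^ (k + 1)).trace / (k + 1) * x ^ (k + 1)))
    (a : ℝ) (ha : a ∈ Set.Ioo (0 : ℝ) R)
    (s : ℝ → ℝ)
    (hs : ∀ p : ℝ, s p = p * (ζ a + 1 - ζ (a * p) - p) / (1 + a * deriv ζ a)) :
    (∀ p ∈ Set.Icc (0 : ℝ) 1, 0 ≤ s p) ∧
      ∀ (W : ℕ) (p : Fin W → ℝ), (∀ i, 0 ≤ p i) → (∑ i, p i) = 1 →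
        0 ≤ ∑ i, s (p i) := by
  obtain ⟨ha0, haR⟩ := ha
  have hζ_mono : MonotoneOn ζ (Ico 0 R) := by
    rw [funext hζ]
    exact Real.exp_monotone.comp_monotoneOn <| monotoneOn_tsum_mul_pow_succ
      (fun k => div_nonneg (T.trace_pow_nonneg hT _) (by positivity)) hsum
  have hζ'_nonneg : 0 ≤ deriv ζ a := hζ_mono.deriv_nonneg_of_mem_nhds (Ico_mem_nhds ha0 haR)
  have hs_nonneg : ∀ p ∈ Icc (0 : ℝ) 1, 0 ≤ s p := by
    rintro p ⟨hp0, hp1⟩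
    have hap : a * p ≤ a := mul_le_of_le_one_right ha0.le hp1
    have hζ_le : ζ (a * p) ≤ ζ a :=
      hζ_mono ⟨by positivity, hap.trans_lt haR⟩ ⟨ha0.le, haR⟩ hap
    rw [hs p]
    exact div_nonneg (mul_nonneg hp0 (by linarith)) (by positivity)
  refine ⟨hs_nonneg, fun W p hp hp_sum => Finset.sum_nonneg fun i _ => hs_nonneg _ ⟨hp i, ?_⟩⟩
  exact hp_sum ▸ Finset.single_le_sum (fun j _ => hp j) (Finset.mem_univ i)

/-- For every p ∈ [0,1] one has s(p) ≥ 0; consequently the Ihara entropy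
S_G(P) = ∑ᵢ s(pᵢ) of any discrete probability distribution is nonnegative. -/
theorem ihara_entropy_nonneg
    (n : ℕ) (hn : 0 < n) (T : Matrix (Fin n) (Fin n) ℝ)
    (hT : ∀ i j, 0 ≤ T i j) (htr : T.trace = 0)
    (R : ℝ) (hR : 0 < R)
    (hsum : ∀ x ∈ Set.Ico (0 : ℝ) R,
      Summable (fun k : ℕ => (T ^ (k + 1)).trace / (k + 1) * x ^ (k + 1)))
    (ζ : ℝ → ℝ)
    (hζ : ∀ x : ℝ, ζ x = Real.exp (∑' k : ℕ, (T ^ (k + 1)).trace / (k + 1) * x ^ (k + 1)))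
    (a : ℝ) (ha : a ∈ Set.Ioo (0 : ℝ) R)
    (s : ℝ → ℝ)
    (hs : ∀ p : ℝ, s p = p * (ζ a + 1 - ζ (a * p) - p) / (1 + a * deriv ζ a)) :
    (∀ p ∈ Set.Icc (0 : ℝ) 1, 0 ≤ s p) ∧
      ∀ (W : ℕ) (p : Fin W → ℝ), (∀ i, 0 ≤ p i) → (∑ i, p i) = 1 →
        0 ≤ ∑ i, s (p i) :=
  ihara_entropy_nonneg_general n T hT R hsum ζ hζ a ha s hs
end

section
/- The function s is continuous on the interval [0,1]; consequently the Ihara entropy S_G(P) = ∑_{i=1}^W s(pᵢ) is a continuous function of its arguments (p₁,…,p_W) on the probability simplex (first Shannon–Khinchin axiom). -/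
/-!
The series defining `log ζ` converges at `a`, and a real series converges absolutely as soon as it
converges, so the Weierstrass M-test makes `log ζ`, hence `ζ`, continuous on `[-a, a]`. As `a * p`
stays in that interval for `p ∈ [0, 1]`, the function `s` is continuous on `[0, 1]`, and the
entropy is continuous on the simplex because every coordinate of a probability vector lies in
`[0, 1]`.
-/

open Set

theorem continuousOn_tsum_mul_pow_of_summable {c : ℕ → ℝ} {e : ℕ → ℕ} {r : ℝ}
    (hr : Summable fun k => c k * r ^ e k) :
    ContinuousOn (fun x => ∑' k, c k * x ^ e k) (Icc (-r) r) := by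
  refine continuousOn_tsum (fun k => (continuous_const.mul (continuous_pow (e k))).continuousOn)
    (summable_abs_iff.mpr hr) fun k x hx => ?_
  have hxr : |x| ≤ |r| := (abs_le.mpr hx).trans (le_abs_self r)
  rw [Real.norm_eq_abs, abs_mul, abs_mul, abs_pow, abs_pow]
  exact mul_le_mul_of_nonneg_left (pow_le_pow_left₀ (abs_nonneg x) hxr _) (abs_nonneg _)

theorem continuousOn_sum_comp_of_stdSimplex {f : ℝ → ℝ} (hf : ContinuousOn f (Icc 0 1))
    (ι : Type*) [Fintype ι] :
    ContinuousOn (fun p : ι → ℝ => ∑ i, f (p i)) (stdSimplex ℝ ι) :=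
  continuousOn_finsetSum _ fun i _ =>
    hf.comp (continuous_apply i).continuousOn fun _ hp => mem_Icc_of_mem_stdSimplex hp i

theorem ihara_entropy_continuous_general
    (n : ℕ) (T : Matrix (Fin n) (Fin n) ℝ)
    (R : ℝ)
    (hsum : ∀ x ∈ Set.Ico (0 : ℝ) R,
      Summable (fun k : ℕ => (T ^ (k + 1)).trace / (k + 1) * x ^ (k + 1)))
    (ζ : ℝ → ℝ)
    (hζ : ∀ x : ℝ, ζ x = Real.exp (∑' k : ℕ, (T ^ (k + 1)).trace / (k + 1) * x ^ (k + 1)))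
    (a : ℝ) (ha : a ∈ Set.Ioo (0 : ℝ) R)
    (s : ℝ → ℝ)
    (hs : ∀ p : ℝ, s p = p * (ζ a + 1 - ζ (a * p) - p) / (1 + a * deriv ζ a)) :
    ContinuousOn s (Set.Icc (0 : ℝ) 1) ∧
      ∀ W : ℕ, ContinuousOn (fun p : Fin W → ℝ => ∑ i, s (p i))
        {p : Fin W → ℝ | (∀ i, 0 ≤ p i) ∧ (∑ i, p i) = 1} := by
  have hζ_cont : ContinuousOn ζ (Icc (-a) a) := by
    rw [funext hζ]
    exact Real.continuous_exp.comp_continuousOn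
      (continuousOn_tsum_mul_pow_of_summable (hsum a ⟨ha.1.le, ha.2⟩))
  have hmaps : MapsTo (a * ·) (Icc 0 1) (Icc (-a) a) := fun p hp =>
    ⟨(neg_nonpos.mpr ha.1.le).trans (mul_nonneg ha.1.le hp.1),
      mul_le_of_le_one_right ha.1.le hp.2⟩
  have hζ_comp : ContinuousOn (fun p => ζ (a * p)) (Icc 0 1) :=
    hζ_cont.comp (continuous_const_mul a).continuousOn hmaps
  have hs_cont : ContinuousOn s (Icc 0 1) := by
    rw [funext hs]
    exact (continuousOn_id.mul ((continuousOn_const.sub hζ_comp).sub continuousOn_id)).div_const _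
  exact ⟨hs_cont, fun W => continuousOn_sum_comp_of_stdSimplex hs_cont (Fin W)⟩

/-- The function s is continuous on [0,1]; consequently the Ihara entropy
S_G(P) = ∑ᵢ s(pᵢ) is a continuous function of (p₁,…,p_W) on the probability simplex
(first Shannon–Khinchin axiom). -/
theorem ihara_entropy_continuous
    (n : ℕ) (hn : 0 < n) (T : Matrix (Fin n) (Fin n) ℝ)
    (hT : ∀ i j, 0 ≤ T i j) (htr : T.trace = 0)
    (R : ℝ) (hR : 0 < R)
    (hsum : ∀ x ∈ Set.Ico (0 : ℝ) R,
      Summable (fun k : ℕ => (T ^ (k + 1)).trace / (k + 1) * x ^ (k + 1)))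
    (ζ : ℝ → ℝ)
    (hζ : ∀ x : ℝ, ζ x = Real.exp (∑' k : ℕ, (T ^ (k + 1)).trace / (k + 1) * x ^ (k + 1)))
    (a : ℝ) (ha : a ∈ Set.Ioo (0 : ℝ) R)
    (s : ℝ → ℝ)
    (hs : ∀ p : ℝ, s p = p * (ζ a + 1 - ζ (a * p) - p) / (1 + a * deriv ζ a)) :
    ContinuousOn s (Set.Icc (0 : ℝ) 1) ∧
      ∀ W : ℕ, ContinuousOn (fun p : Fin W → ℝ => ∑ i, s (p i))
        {p : Fin W → ℝ | (∀ i, 0 ≤ p i) ∧ (∑ i, p i) = 1} :=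
  ihara_entropy_continuous_general n T R hsum ζ hζ a ha s hs
end

section
/- (Third Shannon–Khinchin axiom for the Ihara entropy.) Let W ≥ 1 and let p₁,…,p_W be a probability distribution (pᵢ ≥ 0 for all i and ∑ᵢ pᵢ = 1). Then the Ihara entropy is maximized by the uniform distribution: ∑_{i=1}^W s(pᵢ) ≤ W·s(1/W). -/
/-!
The zeta function is `exp ∘ g` with `g` a power series whose coefficients `tr(T^k)/k` are
nonnegative, so `ζ` is monotone and convex on `[0, R)`. Hence `ζ'(a) ≥ 0`, the denominator of `s`
is positive, and the numerator `q ↦ q (ζ(a) + 1 - ζ(aq) - q)` is concave on `[0, 1]`, because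
`q ↦ q ζ(aq)` is a product of nonnegative, monotone, convex functions. Jensen's inequality with
uniform weights finishes the proof.
-/

open Set

theorem monotoneOn_tsum {ι α : Type*} [Preorder α] {f : ι → α → ℝ} {s : Set α}
    (hf : ∀ k, MonotoneOn (f k) s) (hsum : ∀ x ∈ s, Summable fun k => f k x) :
    MonotoneOn (fun x => ∑' k, f k x) s :=
  fun _ hx _ hy hxy => (hsum _ hx).tsum_le_tsum (fun k => hf k hx hy hxy) (hsum _ hy)

theorem convexOn_tsum {ι E : Type*} [AddCommMonoid E] [Module ℝ E] {f : ι → E → ℝ} {s : Set E}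
    (hs : Convex ℝ s) (hf : ∀ k, ConvexOn ℝ s (f k)) (hsum : ∀ x ∈ s, Summable fun k => f k x) :
    ConvexOn ℝ s (fun x => ∑' k, f k x) := by
  refine ⟨hs, fun x hx y hy a b ha hb hab => ?_⟩
  have hsum_comb : Summable fun k => a • f k x + b • f k y :=
    ((hsum x hx).mul_left a).add ((hsum y hy).mul_left b)
  calc ∑' k, f k (a • x + b • y) ≤ ∑' k, (a • f k x + b • f k y) :=
        (hsum _ (hs hx hy ha hb hab)).tsum_le_tsum (fun k => (hf k).2 hx hy ha hb hab) hsum_comb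
    _ = a • ∑' k, f k x + b • ∑' k, f k y := by
        simp only [smul_eq_mul]
        rw [((hsum x hx).mul_left a).tsum_add ((hsum y hy).mul_left b), tsum_mul_left,
          tsum_mul_left]

theorem ConvexOn.exp {E : Type*} [AddCommMonoid E] [Module ℝ E] {s : Set E} {f : E → ℝ}
    (hf : ConvexOn ℝ s f) : ConvexOn ℝ s fun x => Real.exp (f x) :=
  ⟨hf.1, fun _ hx _ hy _ _ ha hb hab =>
    (Real.exp_le_exp.2 (hf.2 hx hy ha hb hab)).trans
      (convexOn_exp.2 (mem_univ _) (mem_univ _) ha hb hab)⟩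

theorem monotoneOn_const_mul_pow {c : ℝ} (hc : 0 ≤ c) (m : ℕ) :
    MonotoneOn (fun x : ℝ => c * x ^ m) (Ici 0) :=
  fun _ hx _ _ hxy => mul_le_mul_of_nonneg_left (pow_le_pow_left₀ hx hxy m) hc

theorem convexOn_const_mul_pow {c : ℝ} (hc : 0 ≤ c) (m : ℕ) :
    ConvexOn ℝ (Ici 0) (fun x : ℝ => c * x ^ m) := by
  simpa only [smul_eq_mul] using (convexOn_pow m).smul hc

theorem concaveOn_mul_sub_sub {s : Set ℝ} (hs : Convex ℝ s) (hs₀ : s ⊆ Ici 0) {φ : ℝ → ℝ}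
    (hφ_mono : MonotoneOn φ s) (hφ_conv : ConvexOn ℝ s φ) (hφ_nonneg : ∀ q ∈ s, 0 ≤ φ q)
    (b : ℝ) : ConcaveOn ℝ s fun q => q * (b - φ q - q) := by
  have hconv : ConvexOn ℝ s fun q => q * φ q + q ^ 2 :=
    ((convexOn_id hs).mul hφ_conv hs₀ hφ_nonneg (monotoneOn_id.monovaryOn hφ_mono)).add
      ((convexOn_pow 2).subset hs₀ hs)
  have hlin : ConcaveOn ℝ s fun q => b * q := (LinearMap.mulLeft ℝ b).concaveOn hs
  have hsplit : (fun q => q * (b - φ q - q)) = (fun q => b * q) - fun q => q * φ q + q ^ 2 := by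
    ext q
    simp only [Pi.sub_apply]
    ring
  exact hsplit ▸ hlin.sub hconv

theorem ConcaveOn.sum_le_card_mul_map_avg {ι E : Type*} [Fintype ι] [AddCommGroup E]
    [Module ℝ E] {s : Set E} {f : E → ℝ} (hf : ConcaveOn ℝ s f) {p : ι → E}
    (hp : ∀ i, p i ∈ s) :
    ∑ i, f (p i) ≤ Fintype.card ι * f ((Fintype.card ι : ℝ)⁻¹ • ∑ i, p i) := by
  cases isEmpty_or_nonempty ι
  · simp
  have hcard : (0 : ℝ) < Fintype.card ι := by exact_mod_cast Fintype.card_pos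
  have hjensen := hf.le_map_sum (t := Finset.univ) (w := fun _ => (Fintype.card ι : ℝ)⁻¹)
    (fun _ _ => by positivity) (by simp [hcard.ne']) fun i _ => hp i
  rw [← Finset.smul_sum, ← Finset.smul_sum, smul_eq_mul] at hjensen
  rwa [← inv_mul_le_iff₀ hcard]

theorem monotoneOn_convexOn_iharaZeta {ι : Type*} [Fintype ι] [DecidableEq ι]
    {T : Matrix ι ι ℝ} {R : ℝ} {ζ : ℝ → ℝ} (hT : ∀ i j, 0 ≤ T i j)
    (hsum : ∀ x ∈ Ico (0 : ℝ) R,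
      Summable (fun k : ℕ => (T ^ (k + 1)).trace / (k + 1) * x ^ (k + 1)))
    (hζ : ∀ x : ℝ, ζ x = Real.exp (∑' k : ℕ, (T ^ (k + 1)).trace / (k + 1) * x ^ (k + 1))) :
    MonotoneOn ζ (Ico 0 R) ∧ ConvexOn ℝ (Ico 0 R) ζ := by
  have hcoeff (k : ℕ) : 0 ≤ (T ^ (k + 1)).trace / (k + 1) :=
    div_nonneg (Finset.sum_nonneg fun i _ => Matrix.pow_apply_nonneg hT _ i i) (by positivity)
  rw [funext hζ]
  exact ⟨Real.exp_monotone.comp_monotoneOn <| monotoneOn_tsum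
      (fun k => (monotoneOn_const_mul_pow (hcoeff k) _).mono Ico_subset_Ici_self) hsum,
    (convexOn_tsum (convex_Ico 0 R)
      (fun k => (convexOn_const_mul_pow (hcoeff k) _).subset Ico_subset_Ici_self
        (convex_Ico 0 R)) hsum).exp⟩

theorem ihara_entropy_max_at_uniform_general
    (n : ℕ) (T : Matrix (Fin n) (Fin n) ℝ)
    (hT : ∀ i j, 0 ≤ T i j)
    (R : ℝ)
    (hsum : ∀ x ∈ Set.Ico (0 : ℝ) R,
      Summable (fun k : ℕ => (T ^ (k + 1)).trace / (k + 1) * x ^ (k + 1)))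
    (ζ : ℝ → ℝ)
    (hζ : ∀ x : ℝ, ζ x = Real.exp (∑' k : ℕ, (T ^ (k + 1)).trace / (k + 1) * x ^ (k + 1)))
    (a : ℝ) (ha : a ∈ Set.Ioo (0 : ℝ) R)
    (s : ℝ → ℝ)
    (hs : ∀ p : ℝ, s p = p * (ζ a + 1 - ζ (a * p) - p) / (1 + a * deriv ζ a))
    (W : ℕ) (p : Fin W → ℝ)
    (hp : ∀ i, 0 ≤ p i) (hp1 : (∑ i, p i) = 1) :
    (∑ i, s (p i)) ≤ W * s (1 / W) := by
  obtain ⟨hζ_mono, hζ_conv⟩ := monotoneOn_convexOn_iharaZeta hT hsum hζ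
  have hD : 0 < 1 + a * deriv ζ a := by
    have hderiv : 0 ≤ deriv ζ a := by
      rw [← derivWithin_of_isOpen isOpen_Ioo ha]
      exact (hζ_mono.mono Ioo_subset_Ico_self).derivWithin_nonneg
    nlinarith [ha.1]
  have hscale : MapsTo (a * ·) (Icc 0 1) (Ico 0 R) := fun q hq =>
    ⟨mul_nonneg ha.1.le hq.1, (mul_le_of_le_one_right ha.1.le hq.2).trans_lt ha.2⟩
  have hφ_mono : MonotoneOn (fun q => ζ (a * q)) (Icc 0 1) :=
    hζ_mono.comp (fun _ _ _ _ h => mul_le_mul_of_nonneg_left h ha.1.le) hscale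
  have hφ_conv : ConvexOn ℝ (Icc 0 1) fun q => ζ (a * q) :=
    (hζ_conv.comp_linearMap (LinearMap.mulLeft ℝ a)).subset hscale (convex_Icc 0 1)
  have hnum : ConcaveOn ℝ (Icc 0 1) fun q => q * (ζ a + 1 - ζ (a * q) - q) :=
    concaveOn_mul_sub_sub (convex_Icc 0 1) Icc_subset_Ici_self hφ_mono hφ_conv
      (fun q _ => (hζ (a * q)).symm ▸ (Real.exp_pos _).le) _
  have hp_mem (i : Fin W) : p i ∈ Icc (0 : ℝ) 1 :=
    ⟨hp i, hp1 ▸ Finset.single_le_sum (fun j _ => hp j) (Finset.mem_univ i)⟩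
  have hjensen := hnum.sum_le_card_mul_map_avg hp_mem
  simp only [hp1, Fintype.card_fin, smul_eq_mul, mul_one] at hjensen
  simp only [hs, ← Finset.sum_div, one_div, mul_div_assoc']
  exact div_le_div_of_nonneg_right hjensen hD.le

/-- Third Shannon–Khinchin axiom: For any probability distribution
p₁,…,p_W the Ihara entropy satisfies ∑ᵢ s(pᵢ) ≤ W·s(1/W), i.e. the uniform
distribution maximizes the entropy. -/
theorem ihara_entropy_max_at_uniform
    (n : ℕ) (hn : 0 < n) (T : Matrix (Fin n) (Fin n) ℝ)
    (hT : ∀ i j, 0 ≤ T i j) (htr : T.trace = 0)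
    (R : ℝ) (hR : 0 < R)
    (hsum : ∀ x ∈ Set.Ico (0 : ℝ) R,
      Summable (fun k : ℕ => (T ^ (k + 1)).trace / (k + 1) * x ^ (k + 1)))
    (ζ : ℝ → ℝ)
    (hζ : ∀ x : ℝ, ζ x = Real.exp (∑' k : ℕ, (T ^ (k + 1)).trace / (k + 1) * x ^ (k + 1)))
    (a : ℝ) (ha : a ∈ Set.Ioo (0 : ℝ) R)
    (s : ℝ → ℝ)
    (hs : ∀ p : ℝ, s p = p * (ζ a + 1 - ζ (a * p) - p) / (1 + a * deriv ζ a))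
    (W : ℕ) (hW : 1 ≤ W) (p : Fin W → ℝ)
    (hp : ∀ i, 0 ≤ p i) (hp1 : (∑ i, p i) = 1) :
    (∑ i, s (p i)) ≤ W * s (1 / W) :=
  ihara_entropy_max_at_uniform_general n T hT R hsum ζ hζ a ha s hs W p hp hp1
end
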